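/- A pair (v*, y*) is a global minimizer of G(v,y) := Ψ̂(v) + (1/(2γ))‖Ĩv − y‖₂² + ι_m(y) (where Ψ̂(v) := f(v) + ι_q(Qv)) if and only if v* is a global minimizer of Ψ(v) := Ψ̂(v) + ι̃_{m,γ}(Ĩv) and y* = S_m(Ĩv*). (Theorem 2: equivalence of the dual-variable surrogate and the single-variable relaxed model.) -/

import Mathlib

open scoped Classical

noncomputable def norm0 {N : ℕ} (y : Fin N → ℝ) : ℕ :=
  (Finset.univ.filter (fun j => y j ≠ 0)).card

def IsLAV {N : ℕ} (m : ℕ) (w : Fin N → ℝ) (J : Finset (Fin N)) : Prop :=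
  J.card = m ∧ ∀ i ∈ J, ∀ j ∉ J, |w j| ≤ |w i|

def hardThresh {N : ℕ} (w : Fin N → ℝ) (J : Finset (Fin N)) : Fin N → ℝ :=
  fun j => if j ∈ J then w j else 0

/-- indicator of the constraint `u ≥ q` (componentwise) -/
noncomputable def iotaQ {n : ℕ} (q u : Fin n → ℝ) : EReal :=
  if ∀ i, q i ≤ u i then 0 else ⊤

/-- indicator of the m-sparse set -/
noncomputable def iotaM {N : ℕ} (m : ℕ) (y : Fin N → ℝ) : EReal :=
  if norm0 y ≤ m then 0 else ⊤

/-- tailed approximation of the `ℓ₀` constraint, via its variational form: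
`ι̃_{m,γ}(w) = (1/(2γ)) · inf { ‖w − y‖₂² : ‖y‖₀ ≤ m }` -/
noncomputable def iotaTilde {N : ℕ} (m : ℕ) (γ : ℝ) (w : Fin N → ℝ) : ℝ :=
  (1 / (2 * γ)) * sInf {c : ℝ | ∃ y : Fin N → ℝ, norm0 y ≤ m ∧ c = ∑ j, (w j - y j) ^ 2}

/-- relaxed objective `Ψ(v) = f(v) + ι_q(Qv) + ι̃_{m,γ}(Ĩv)` -/
noncomputable def Psi {N N₁ N₂ : ℕ} (m : ℕ) (γ : ℝ) (f : (Fin N₁ → ℝ) → ℝ)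
    (Q : Matrix (Fin N₂) (Fin N₁) ℝ) (q : Fin N₂ → ℝ)
    (Itil : Matrix (Fin N) (Fin N₁) ℝ) (v : Fin N₁ → ℝ) : EReal :=
  (f v : EReal) + iotaQ q (Q.mulVec v) + (iotaTilde m γ (Itil.mulVec v) : ℝ)

/-- surrogate objective
`G(v,y) = f(v) + ι_q(Qv) + (1/(2γ))‖Ĩv − y‖₂² + ι_m(y)` -/
noncomputable def Gfun {N N₁ N₂ : ℕ} (m : ℕ) (γ : ℝ) (f : (Fin N₁ → ℝ) → ℝ)
    (Q : Matrix (Fin N₂) (Fin N₁) ℝ) (q : Fin N₂ → ℝ)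
    (Itil : Matrix (Fin N) (Fin N₁) ℝ) (v : Fin N₁ → ℝ) (y : Fin N → ℝ) : EReal :=
  (f v : EReal) + iotaQ q (Q.mulVec v)
    + (((1 / (2 * γ)) * ∑ j, (Itil.mulVec v j - y j) ^ 2 : ℝ) : EReal)
    + iotaM m y

/-!
For fixed `v`, minimising `G(v, ·)` is best `m`-sparse approximation of `w = Ĩv` in `ℓ₂`. Keeping
only the entries indexed by `A` costs `∑_{j ∉ A} w_j²`, so the best approximations are the hard
thresholdings of `w` on index sets maximising `∑_{j ∈ J} w_j²` among sets of size at most `m`, and an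
exchange argument identifies these maximisers (padded to size `m` by zeros of `w`) with the `m`-LAV
sets. Hence `min_y G(v, y) = G(v, S_m(Ĩv)) = Ψ(v)`, and every minimiser in `y` is such a thresholding.
Feasibility of `Qv ≥ q` makes the minimum of `G` finite, so it is attained only at feasible sparse
points, where `G` is a real-valued function.
-/

open Finset

namespace Finset

variable {ι : Type*}

theorem sum_le_sum_of_card_le_of_forall_le {s t : Finset ι} {f : ι → ℝ} (hst : #s ≤ #t)
    (hf : ∀ a ∈ s, ∀ b ∈ t, f a ≤ f b) (ht : ∀ b ∈ t, 0 ≤ f b) :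
    ∑ a ∈ s, f a ≤ ∑ b ∈ t, f b := by
  rcases t.eq_empty_or_nonempty with rfl | htne
  · simp [card_eq_zero.mp (Nat.le_zero.mp hst)]
  set c := t.inf' htne f
  calc ∑ a ∈ s, f a ≤ #s • c :=
        sum_le_card_nsmul s f c fun a ha => le_inf' htne f fun b hb => hf a ha b hb
    _ ≤ #t • c := nsmul_le_nsmul_left (le_inf' htne f ht) hst
    _ ≤ ∑ b ∈ t, f b := card_nsmul_le_sum t f c fun b hb => inf'_le f hb

theorem apply_le_apply_of_forall_card_eq_sum_le {s : Finset ι} {f : ι → ℝ}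
    (hs : ∀ t : Finset ι, #t = #s → ∑ x ∈ t, f x ≤ ∑ x ∈ s, f x) {i j : ι}
    (hi : i ∈ s) (hj : j ∉ s) : f j ≤ f i := by
  have hj' : j ∉ s.erase i := fun h => hj (mem_of_mem_erase h)
  have hswap := hs (insert j (s.erase i))
    (by rw [card_insert_of_notMem hj', card_erase_add_one hi])
  rw [sum_insert hj', ← add_sum_erase s f hi] at hswap
  linarith

theorem exists_card_eq_forall_sum_le [Fintype ι] (f : ι → ℝ) {m : ℕ} (hm : m ≤ Fintype.card ι) :
    ∃ s : Finset ι, #s = m ∧ ∀ t : Finset ι, #t = m → ∑ x ∈ t, f x ≤ ∑ x ∈ s, f x := by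
  obtain ⟨s, hs, hmax⟩ := (powersetCard m (univ : Finset ι)).exists_max_image
    (fun t => ∑ x ∈ t, f x) (powersetCard_nonempty.mpr (by simpa using hm))
  exact ⟨s, (mem_powersetCard.mp hs).2,
    fun t ht => hmax t (mem_powersetCard.mpr ⟨subset_univ t, ht⟩)⟩

end Finset

section Sparse

variable {N m : ℕ} {w y : Fin N → ℝ} {J : Finset (Fin N)}

noncomputable def suppFinset (y : Fin N → ℝ) : Finset (Fin N) := {j | y j ≠ 0}

theorem eq_zero_of_notMem_suppFinset {j : Fin N} (hj : j ∉ suppFinset y) : y j = 0 := by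
  simpa [suppFinset] using hj

theorem IsLAV.sum_sq_le (hJ : IsLAV m w J) {A : Finset (Fin N)} (hA : #A ≤ m) :
    ∑ j ∈ A, w j ^ 2 ≤ ∑ j ∈ J, w j ^ 2 := by
  rw [← sum_inter_add_sum_sdiff A J, ← sum_inter_add_sum_sdiff J A, inter_comm]
  refine add_le_add_right (sum_le_sum_of_card_le_of_forall_le ?_ ?_ ?_) _
  · rw [card_sdiff_le_card_sdiff_iff, hJ.1]; exact hA
  · intro a ha b hb
    exact sq_le_sq.mpr (hJ.2 b (mem_sdiff.mp hb).1 a (mem_sdiff.mp ha).2)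
  · intro b _; positivity

theorem isLAV_of_forall_sum_sq_le (hJ : #J = m)
    (hmax : ∀ A : Finset (Fin N), #A = m → ∑ j ∈ A, w j ^ 2 ≤ ∑ j ∈ J, w j ^ 2) :
    IsLAV m w J :=
  ⟨hJ, fun _ hi _ hj => sq_le_sq.mp <|
    apply_le_apply_of_forall_card_eq_sum_le (fun A hA => hmax A (hA.trans hJ)) hi hj⟩

theorem exists_isLAV (hm : m ≤ N) (w : Fin N → ℝ) : ∃ J, IsLAV m w J := by
  obtain ⟨J, hJ, hmax⟩ :=
    exists_card_eq_forall_sum_le (fun j => w j ^ 2) (m := m) (by simpa using hm)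
  exact ⟨J, isLAV_of_forall_sum_sq_le hJ hmax⟩

theorem norm0_hardThresh_le (w : Fin N → ℝ) (A : Finset (Fin N)) :
    norm0 (hardThresh w A) ≤ #A := by
  refine card_le_card fun j hj => ?_
  by_contra hjA
  simp [hardThresh, hjA] at hj

theorem sum_sq_sub_hardThresh (w : Fin N → ℝ) (A : Finset (Fin N)) :
    ∑ j, (w j - hardThresh w A j) ^ 2 = ∑ j ∈ Aᶜ, w j ^ 2 := by
  rw [← sum_add_sum_compl A, sum_eq_zero fun j hj => by simp [hardThresh, hj], zero_add]
  exact sum_congr rfl fun j hj => by simp [hardThresh, mem_compl.mp hj]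

theorem sum_sq_sub_eq (w y : Fin N → ℝ) :
    ∑ j, (w j - y j) ^ 2
      = ∑ j ∈ suppFinset y, (w j - y j) ^ 2 + ∑ j ∈ (suppFinset y)ᶜ, w j ^ 2 := by
  rw [← sum_add_sum_compl (suppFinset y)]
  congr 1
  exact sum_congr rfl fun j hj => by rw [eq_zero_of_notMem_suppFinset (mem_compl.mp hj), sub_zero]

theorem IsLAV.sum_compl_sq_le (hJ : IsLAV m w J) (hy : norm0 y ≤ m) :
    ∑ j ∈ Jᶜ, w j ^ 2 ≤ ∑ j, (w j - y j) ^ 2 := by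
  have hsupp := hJ.sum_sq_le (A := suppFinset y) hy
  have hS : 0 ≤ ∑ j ∈ suppFinset y, (w j - y j) ^ 2 := sum_nonneg fun _ _ => sq_nonneg _
  rw [sum_sq_sub_eq]
  linarith [sum_compl_add_sum J (fun j => w j ^ 2),
    sum_compl_add_sum (suppFinset y) (fun j => w j ^ 2)]

theorem IsLAV.isLeast_sum_sq_sub (hJ : IsLAV m w J) :
    IsLeast {c : ℝ | ∃ y : Fin N → ℝ, norm0 y ≤ m ∧ c = ∑ j, (w j - y j) ^ 2}
      (∑ j ∈ Jᶜ, w j ^ 2) :=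
  ⟨⟨hardThresh w J, (norm0_hardThresh_le w J).trans hJ.1.le, (sum_sq_sub_hardThresh w J).symm⟩,
    by rintro _ ⟨y, hy, rfl⟩; exact hJ.sum_compl_sq_le hy⟩

theorem IsLAV.iotaTilde_eq (hJ : IsLAV m w J) (γ : ℝ) :
    iotaTilde m γ w = 1 / (2 * γ) * ∑ j ∈ Jᶜ, w j ^ 2 := by
  rw [iotaTilde, hJ.isLeast_sum_sq_sub.csInf_eq]

theorem eq_hardThresh_of_sum_sq_sub_le
    (h : ∑ j, (w j - y j) ^ 2 ≤ ∑ j ∈ (suppFinset y)ᶜ, w j ^ 2) :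
    y = hardThresh w (suppFinset y) := by
  rw [sum_sq_sub_eq] at h
  have hzero : ∑ j ∈ suppFinset y, (w j - y j) ^ 2 = 0 :=
    le_antisymm (by linarith) (sum_nonneg fun _ _ => sq_nonneg _)
  rw [sum_eq_zero_iff_of_nonneg fun _ _ => sq_nonneg _] at hzero
  funext j
  by_cases hj : j ∈ suppFinset y
  · rw [hardThresh, if_pos hj]
    exact (sub_eq_zero.mp (pow_eq_zero_iff two_ne_zero |>.mp (hzero j hj))).symm
  · rw [hardThresh, if_neg hj, eq_zero_of_notMem_suppFinset hj]

theorem hardThresh_eq_of_subset_of_sum_sq_le {S T : Finset (Fin N)} (hST : S ⊆ T)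
    (h : ∑ j ∈ T, w j ^ 2 ≤ ∑ j ∈ S, w j ^ 2) : hardThresh w T = hardThresh w S := by
  have hzero : ∑ j ∈ T \ S, w j ^ 2 = 0 :=
    le_antisymm (by linarith [sum_sdiff hST (f := fun j => w j ^ 2)])
      (sum_nonneg fun _ _ => sq_nonneg _)
  rw [sum_eq_zero_iff_of_nonneg fun _ _ => sq_nonneg _] at hzero
  funext j
  by_cases hjS : j ∈ S
  · simp [hardThresh, hjS, hST hjS]
  by_cases hjT : j ∈ T
  · have hwj : w j ^ 2 = 0 := hzero j (mem_sdiff.mpr ⟨hjT, hjS⟩)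
    simp [hardThresh, hjS, hjT, pow_eq_zero_iff two_ne_zero |>.mp hwj]
  · simp [hardThresh, hjS, hjT]

theorem exists_isLAV_eq_hardThresh (hm : m ≤ N) (hy : norm0 y ≤ m)
    (hmin : ∀ y' : Fin N → ℝ, norm0 y' ≤ m → ∑ j, (w j - y j) ^ 2 ≤ ∑ j, (w j - y' j) ^ 2) :
    ∃ J, IsLAV m w J ∧ y = hardThresh w J := by
  set S := suppFinset y
  have hle : ∀ A : Finset (Fin N), #A ≤ m → ∑ j, (w j - y j) ^ 2 ≤ ∑ j ∈ Aᶜ, w j ^ 2 :=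
    fun A hA => sum_sq_sub_hardThresh w A ▸ hmin _ ((norm0_hardThresh_le w A).trans hA)
  have hyS : y = hardThresh w S := eq_hardThresh_of_sum_sq_sub_le (hle S hy)
  have hSmax : ∀ A : Finset (Fin N), #A ≤ m → ∑ j ∈ A, w j ^ 2 ≤ ∑ j ∈ S, w j ^ 2 := by
    intro A hA
    have h := hle A hA
    rw [hyS, sum_sq_sub_hardThresh] at h
    linarith [sum_compl_add_sum A (fun j => w j ^ 2), sum_compl_add_sum S (fun j => w j ^ 2)]
  obtain ⟨J, hSJ, hJ⟩ := exists_superset_card_eq hy (by simpa using hm)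
  have hJS : ∑ j ∈ S, w j ^ 2 ≤ ∑ j ∈ J, w j ^ 2 :=
    sum_le_sum_of_subset_of_nonneg hSJ fun _ _ _ => sq_nonneg _
  exact ⟨J, isLAV_of_forall_sum_sq_le hJ fun A hA => (hSmax A hA.le).trans hJS,
    hyS.trans (hardThresh_eq_of_subset_of_sum_sq_le hSJ (hSmax J hJ.le)).symm⟩

end Sparse

section Objectives

variable {N N₁ N₂ m : ℕ} {γ : ℝ} {f : (Fin N₁ → ℝ) → ℝ} {Q : Matrix (Fin N₂) (Fin N₁) ℝ}
  {q : Fin N₂ → ℝ} {Itil : Matrix (Fin N) (Fin N₁) ℝ} {v : Fin N₁ → ℝ} {y : Fin N → ℝ}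

theorem Gfun_eq_coe (hQ : ∀ i, q i ≤ Q.mulVec v i) (hy : norm0 y ≤ m) :
    Gfun m γ f Q q Itil v y
      = ((f v + 1 / (2 * γ) * ∑ j, (Itil.mulVec v j - y j) ^ 2 : ℝ) : EReal) := by
  rw [Gfun, iotaQ, iotaM, if_pos hQ, if_pos hy, add_zero, add_zero, EReal.coe_add]

theorem Psi_eq_coe (hQ : ∀ i, q i ≤ Q.mulVec v i) :
    Psi m γ f Q q Itil v = ((f v + iotaTilde m γ (Itil.mulVec v) : ℝ) : EReal) := by
  rw [Psi, iotaQ, if_pos hQ, add_zero, EReal.coe_add]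

theorem feasible_of_Gfun_ne_top (h : Gfun m γ f Q q Itil v y ≠ ⊤) :
    (∀ i, q i ≤ Q.mulVec v i) ∧ norm0 y ≤ m := by
  rw [Gfun, iotaQ, iotaM] at h
  generalize 1 / (2 * γ) * ∑ j, (Itil.mulVec v j - y j) ^ 2 = c at h
  split_ifs at h with hQ hy
  · exact ⟨hQ, hy⟩
  all_goals simp [← EReal.coe_add] at h

theorem Gfun_hardThresh_eq_Psi {J : Finset (Fin N)} (hJ : IsLAV m (Itil.mulVec v) J) :
    Gfun m γ f Q q Itil v (hardThresh (Itil.mulVec v) J) = Psi m γ f Q q Itil v := by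
  rw [Gfun, Psi, iotaM, if_pos ((norm0_hardThresh_le _ J).trans hJ.1.le), add_zero,
    sum_sq_sub_hardThresh, hJ.iotaTilde_eq]

theorem Psi_le_Gfun (hm : m ≤ N) (hγ : 0 < γ) (v : Fin N₁ → ℝ) (y : Fin N → ℝ) :
    Psi m γ f Q q Itil v ≤ Gfun m γ f Q q Itil v y := by
  by_cases htop : Gfun m γ f Q q Itil v y = ⊤
  · exact htop ▸ le_top
  obtain ⟨hQ, hy⟩ := feasible_of_Gfun_ne_top htop
  obtain ⟨J, hJ⟩ := exists_isLAV hm (Itil.mulVec v)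
  rw [Psi_eq_coe hQ, Gfun_eq_coe hQ hy, EReal.coe_le_coe_iff, hJ.iotaTilde_eq]
  gcongr
  exact hJ.sum_compl_sq_le hy

theorem sum_sq_sub_le_of_Gfun_le (hγ : 0 < γ) (hQ : ∀ i, q i ≤ Q.mulVec v i)
    (hy : norm0 y ≤ m) {y' : Fin N → ℝ} (hy' : norm0 y' ≤ m)
    (h : Gfun m γ f Q q Itil v y ≤ Gfun m γ f Q q Itil v y') :
    ∑ j, (Itil.mulVec v j - y j) ^ 2 ≤ ∑ j, (Itil.mulVec v j - y' j) ^ 2 := by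
  rw [Gfun_eq_coe hQ hy, Gfun_eq_coe hQ hy', EReal.coe_le_coe_iff, add_le_add_iff_left] at h
  exact le_of_mul_le_mul_left h (by positivity)

end Objectives

/-- Theorem 2: assuming the constraint `Qv ≥ q` is feasible,
`(v*, y*)` is a global minimizer of `G` iff `v*` is a global minimizer of `Ψ`
and `y* = S_m(Ĩv*)` for some m-LAV index set of `Ĩv*`. -/
theorem G_minimizer_iff_Psi_minimizer {N N₁ N₂ m : ℕ} (hm : m ≤ N)
    (γ : ℝ) (hγ : 0 < γ)
    (f : (Fin N₁ → ℝ) → ℝ) (Q : Matrix (Fin N₂) (Fin N₁) ℝ) (q : Fin N₂ → ℝ)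
    (Itil : Matrix (Fin N) (Fin N₁) ℝ)
    (hfeas : ∃ v : Fin N₁ → ℝ, ∀ i, q i ≤ Q.mulVec v i)
    (vs : Fin N₁ → ℝ) (ys : Fin N → ℝ) :
    (∀ (v : Fin N₁ → ℝ) (y : Fin N → ℝ),
        Gfun m γ f Q q Itil vs ys ≤ Gfun m γ f Q q Itil v y) ↔
      ((∀ v : Fin N₁ → ℝ, Psi m γ f Q q Itil vs ≤ Psi m γ f Q q Itil v) ∧
        ∃ J : Finset (Fin N), IsLAV m (Itil.mulVec vs) J ∧
          ys = hardThresh (Itil.mulVec vs) J) := by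
  constructor
  · intro hmin
    obtain ⟨v₀, hv₀⟩ := hfeas
    obtain ⟨J₀, hJ₀⟩ := exists_isLAV hm (Itil.mulVec v₀)
    have hfin : Gfun m γ f Q q Itil vs ys ≠ ⊤ := by
      refine ne_top_of_le_ne_top ?_ (hmin v₀ (hardThresh (Itil.mulVec v₀) J₀))
      rw [Gfun_hardThresh_eq_Psi hJ₀, Psi_eq_coe hv₀]
      exact EReal.coe_ne_top _
    obtain ⟨hQs, hys⟩ := feasible_of_Gfun_ne_top hfin
    obtain ⟨J, hJ, rfl⟩ := exists_isLAV_eq_hardThresh hm hys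
      fun y hy => sum_sq_sub_le_of_Gfun_le hγ hQs hys hy (hmin vs y)
    refine ⟨fun v => ?_, J, hJ, rfl⟩
    obtain ⟨Jv, hJv⟩ := exists_isLAV hm (Itil.mulVec v)
    calc Psi m γ f Q q Itil vs = Gfun m γ f Q q Itil vs (hardThresh _ J) :=
          (Gfun_hardThresh_eq_Psi hJ).symm
      _ ≤ Gfun m γ f Q q Itil v (hardThresh _ Jv) := hmin v _
      _ = Psi m γ f Q q Itil v := Gfun_hardThresh_eq_Psi hJv
  · rintro ⟨hPsi, J, hJ, rfl⟩ v y
    calc Gfun m γ f Q q Itil vs (hardThresh (Itil.mulVec vs) J) = Psi m γ f Q q Itil vs :=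
          Gfun_hardThresh_eq_Psi hJ
      _ ≤ Psi m γ f Q q Itil v := hPsi v
      _ ≤ Gfun m γ f Q q Itil v y := Psi_le_Gfun hm hγ v y
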